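/- Let $h \in C^1(\overline\Omega)$ with $h_p > 0$ on $\overline\Omega$, where $\Omega = \mathbb{S}\times(p_0,0)$, let $g, \sigma > 0$, $Q \in \mathbb{R}$, and suppose $h$ satisfies on $p = 0$ the nonlocal equation $h + (1-\partial_q^2)^{-1}\mathrm{tr}_0\big(\frac{(1+h_q^2+(2gh-Q)h_p^2)(1+h_q^2)^{3/2}}{2\sigma h_p^2} - h\big) = 0$, where $\mathrm{tr}_0 h \in C^\alpha(\mathbb{S})$ and the argument of $(1-\partial_q^2)^{-1}$ is in $C^\alpha(\mathbb{S})$. Then $\mathrm{tr}_0 h \in C^{2+\alpha}(\mathbb{S})$ and $h$ satisfies pointwise on $p = 0$ the Bernoulli boundary condition $1 + h_q^2 + (2gh - Q)h_p^2 - 2\sigma \frac{h_p^2 h_{qq}}{(1+h_q^2)^{3/2}} = 0$. -/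

import Mathlib

/-!
On `p = 0` the nonlocal equation says `tr₀ h = -ψ` with `ψ = (1-∂_q²)⁻¹ φ`, so the trace inherits
the two Hölder derivatives of `ψ`: `∂_q tr₀ h = -ψ'` and `∂_q² tr₀ h = -ψ''`. Substituting
`h = -ψ` into `ψ - ψ'' = φ` cancels the `-h` term of `φ`, leaving
`(1+h_q²+(2gh-Q)h_p²)(1+h_q²)^{3/2} / (2σh_p²) = h_qq`, which is the Bernoulli condition
after clearing the (positive) denominators.
-/

theorem HasDerivAt.eq_neg_of_add_eq_zero {𝕜 F : Type*} [NontriviallyNormedField 𝕜]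
    [NormedAddCommGroup F] [NormedSpace 𝕜 F] {f g : 𝕜 → F} {f' g' : F} {x : 𝕜}
    (hf : HasDerivAt f f' x) (hg : HasDerivAt g g' x) (hfg : ∀ t, f t + g t = 0) :
    f' = -g' := by
  have hf_eq : f = fun t => -g t := funext fun t => eq_neg_of_add_eq_zero_left (hfg t)
  exact hf.unique (hf_eq ▸ hg.neg)

theorem sub_div_eq_zero_of_mul_div_eq {K : Type*} [Field K] {A s d k : K}
    (hs : s ≠ 0) (hd : d ≠ 0) (h : A * s / d = k) : A - d * k / s = 0 := by
  rw [← h]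
  field_simp
  ring

theorem nonlocal_implies_bernoulli_general
    (p0 α g σ Q : ℝ) (hp0 : p0 < 0)
    (hσ : 0 < σ)
    (h hq hp : ℝ × ℝ → ℝ)
    (strip : Set (ℝ × ℝ)) (hstrip : strip = {x : ℝ × ℝ | x.2 ∈ Set.Icc p0 0})
    (hdq : ∀ x ∈ strip, HasDerivAt (fun t => h (t, x.2)) (hq x) x.1)
    (hppos : ∀ x ∈ strip, 0 < hp x)
    (φ : ℝ → ℝ)
    (hφ : ∀ q : ℝ, φ q =
      (1 + hq (q, 0) ^ 2 + (2 * g * h (q, 0) - Q) * hp (q, 0) ^ 2) *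
        (1 + hq (q, 0) ^ 2) ^ ((3:ℝ)/2) / (2 * σ * hp (q, 0) ^ 2) - h (q, 0))
    (ψ ψ' ψ'' : ℝ → ℝ)
    (hψ1 : ∀ q, HasDerivAt ψ (ψ' q) q)
    (hψ2 : ∀ q, HasDerivAt ψ' (ψ'' q) q)
    (hψ''hold : ∃ C : ℝ, ∀ x y : ℝ, |ψ'' x - ψ'' y| ≤ C * |x - y| ^ α)
    (hinv : ∀ q, ψ q - ψ'' q = φ q)
    -- the nonlocal boundary equation on `p = 0` :
    (hnonlocal : ∀ q : ℝ, h (q, 0) + ψ q = 0) :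
    ∃ tr'' : ℝ → ℝ,
      (∀ q, HasDerivAt (fun t => hq (t, 0)) (tr'' q) q) ∧
      (∃ C : ℝ, ∀ x y : ℝ, |tr'' x - tr'' y| ≤ C * |x - y| ^ α) ∧
      ∀ q : ℝ,
        1 + hq (q, 0) ^ 2 + (2 * g * h (q, 0) - Q) * hp (q, 0) ^ 2 -
          2 * σ * (hp (q, 0) ^ 2 * tr'' q) / (1 + hq (q, 0) ^ 2) ^ ((3:ℝ)/2) = 0 := by
  have hmem : ∀ q : ℝ, ((q, 0) : ℝ × ℝ) ∈ strip := fun q => hstrip ▸ ⟨hp0.le, le_rfl⟩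
  have htrace_deriv : (fun t => hq (t, 0)) = fun t => -ψ' t := funext fun t =>
    (hdq (t, 0) (hmem t)).eq_neg_of_add_eq_zero (hψ1 t) hnonlocal
  refine ⟨fun q => -ψ'' q, fun q => htrace_deriv ▸ (hψ2 q).neg, ?_, fun q => ?_⟩
  · obtain ⟨C, hC⟩ := hψ''hold
    refine ⟨C, fun x y => ?_⟩
    rw [neg_sub_neg, abs_sub_comm]
    exact hC x y
  · have hcurvature : (1 + hq (q, 0) ^ 2 + (2 * g * h (q, 0) - Q) * hp (q, 0) ^ 2) *
        (1 + hq (q, 0) ^ 2) ^ ((3:ℝ)/2) / (2 * σ * hp (q, 0) ^ 2) = -ψ'' q := by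
      linarith [hinv q, hφ q, hnonlocal q]
    have hp_pos := hppos (q, 0) (hmem q)
    rw [← mul_assoc]
    exact sub_div_eq_zero_of_mul_div_eq (by positivity) (by positivity) hcurvature

theorem nonlocal_implies_bernoulli
    (p0 α g σ Q : ℝ) (hp0 : p0 < 0) (hα : α ∈ Set.Ioo (0:ℝ) 1)
    (hg : 0 < g) (hσ : 0 < σ)
    (h hq hp : ℝ × ℝ → ℝ)
    (strip : Set (ℝ × ℝ)) (hstrip : strip = {x : ℝ × ℝ | x.2 ∈ Set.Icc p0 0})
    (hcont : ContinuousOn h strip) (hqcont : ContinuousOn hq strip)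
    (hpcont : ContinuousOn hp strip)
    (hdq : ∀ x ∈ strip, HasDerivAt (fun t => h (t, x.2)) (hq x) x.1)
    (hdp : ∀ x ∈ strip, HasDerivWithinAt (fun t => h (x.1, t)) (hp x) (Set.Icc p0 0) x.2)
    (hppos : ∀ x ∈ strip, 0 < hp x)
    (φ : ℝ → ℝ)
    (hφ : ∀ q : ℝ, φ q =
      (1 + hq (q, 0) ^ 2 + (2 * g * h (q, 0) - Q) * hp (q, 0) ^ 2) *
        (1 + hq (q, 0) ^ 2) ^ ((3:ℝ)/2) / (2 * σ * hp (q, 0) ^ 2) - h (q, 0))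
    (hφhold : ∃ C : ℝ, ∀ x y : ℝ, |φ x - φ y| ≤ C * |x - y| ^ α)
    (ψ ψ' ψ'' : ℝ → ℝ)
    (hψper : Function.Periodic ψ (2 * Real.pi))
    (hψ1 : ∀ q, HasDerivAt ψ (ψ' q) q)
    (hψ2 : ∀ q, HasDerivAt ψ' (ψ'' q) q)
    (hψ''hold : ∃ C : ℝ, ∀ x y : ℝ, |ψ'' x - ψ'' y| ≤ C * |x - y| ^ α)
    (hinv : ∀ q, ψ q - ψ'' q = φ q)
    -- the nonlocal boundary equation on `p = 0` :
    (hnonlocal : ∀ q : ℝ, h (q, 0) + ψ q = 0) :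
    ∃ tr'' : ℝ → ℝ,
      (∀ q, HasDerivAt (fun t => hq (t, 0)) (tr'' q) q) ∧
      (∃ C : ℝ, ∀ x y : ℝ, |tr'' x - tr'' y| ≤ C * |x - y| ^ α) ∧
      ∀ q : ℝ,
        1 + hq (q, 0) ^ 2 + (2 * g * h (q, 0) - Q) * hp (q, 0) ^ 2 -
          2 * σ * (hp (q, 0) ^ 2 * tr'' q) / (1 + hq (q, 0) ^ 2) ^ ((3:ℝ)/2) = 0 :=
  nonlocal_implies_bernoulli_general p0 α g σ Q hp0 hσ h hq hp strip hstrip hdq hppos φ hφ ψ ψ' ψ''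
    hψ1 hψ2 hψ''hold hinv hnonlocal
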